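/- For every ε > 0 there exists n₀ such that for all n ≥ n₀, every prime p, and every brick B = [X, Y, Z] in the Heisenberg group H_n over F_p with |B| > |H_n|^(3/4 + ε), the product set B·B contains at least |B|/p many cosets of the center [0, 0, F_p] of H_n. -/

import Mathlib

/-!
Write the brick as `B = A × Z`, where `A = ∏ Xᵢ × ∏ Yᵢ` is its horizontal part. The product of
`(a, v - b, z)` and `(u - a, b, z')` is `(u, v, ∑ aᵢ bᵢ + z + z')`, so the whole central coset
over `(u, v)` lies in `B·B` once the sums `∑ aᵢ bᵢ + z + z'` cover `𝔽_p`, with `aᵢ, uᵢ - aᵢ ∈ Xᵢ`,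
`bᵢ, vᵢ - bᵢ ∈ Yᵢ` and `z, z' ∈ Z`. By the bound `|∑_{a ∈ A', b ∈ B'} e(cab)|² ≤ p |A'| |B'|`
(`c ≠ 0`) and Parseval for `Z`, this happens as soon as `r(u, v) |Z|² > p^(n+2)`, where `r(u, v)` is
the number of ways to write `(u, v)` as a sum of two points of `A`. Since `∑ r = |A|²` and
`r ≤ |A|`, at least `|A| - p^(3n+2) / (|A| |Z|²)` points are good, and `|B|² ≥ p^(3n+3)` together
with `|Z| ≤ p - 1` makes this at least `|B| / p`. If `Z = 𝔽_p`, every translate `A + h` with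
`h ∈ A` already consists of good points.
-/

open scoped Pointwise

def Heis (p n : ℕ) : Type := (Fin n → ZMod p) × (Fin n → ZMod p) × ZMod p

namespace Heis

variable {p n : ℕ}

instance : Mul (Heis p n) :=
  ⟨fun a b => (a.1 + b.1, a.2.1 + b.2.1, (∑ i, a.1 i * b.2.1 i) + a.2.2 + b.2.2)⟩
instance : One (Heis p n) := ⟨((0 : Fin n → ZMod p), (0 : Fin n → ZMod p), (0 : ZMod p))⟩
instance : Inv (Heis p n) :=
  ⟨fun a => (-a.1, -a.2.1, (∑ i, a.1 i * a.2.1 i) - a.2.2)⟩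

lemma one_def : (1 : Heis p n) = ((0 : Fin n → ZMod p), (0 : Fin n → ZMod p), (0 : ZMod p)) := rfl

lemma inv_def (a : Heis p n) :
    a⁻¹ = (-a.1, -a.2.1, (∑ i, a.1 i * a.2.1 i) - a.2.2) := rfl

lemma mul_def (a b : Heis p n) :
    a * b = (a.1 + b.1, a.2.1 + b.2.1, (∑ i, a.1 i * b.2.1 i) + a.2.2 + b.2.2) := rfl

instance : Group (Heis p n) :=
  Group.ofLeftAxioms
    (fun a b c => by
      rw [mul_def, mul_def, mul_def, mul_def]
      refine Prod.ext ?_ (Prod.ext ?_ ?_) <;>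
        simp [mul_def, Finset.sum_add_distrib, add_mul, mul_add] <;> ring)
    (fun a => by
      rw [mul_def, one_def]
      refine Prod.ext ?_ (Prod.ext ?_ ?_) <;>
        simp [mul_def, one_def])
    (fun a => by
      rw [mul_def, one_def, inv_def]
      refine Prod.ext ?_ (Prod.ext ?_ ?_) <;>
        simp [mul_def, one_def, inv_def, Finset.sum_add_distrib, neg_mul, mul_comm] <;> ring)

instance [NeZero p] : Fintype (Heis p n) :=
  inferInstanceAs (Fintype ((Fin n → ZMod p) × (Fin n → ZMod p) × ZMod p))

instance : DecidableEq (Heis p n) :=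
  inferInstanceAs (DecidableEq ((Fin n → ZMod p) × (Fin n → ZMod p) × ZMod p))

end Heis

open Finset

lemma AddChar.map_sum_eq_prod {A M ι : Type*} [AddCommMonoid A] [CommMonoid M] (ψ : AddChar A M)
    (s : Finset ι) (f : ι → A) : ψ (∑ i ∈ s, f i) = ∏ i ∈ s, ψ (f i) := by
  classical
  induction s using Finset.induction_on with
  | empty => simp
  | insert i s hi ih => rw [sum_insert hi, prod_insert hi, AddChar.map_add_eq_mul, ih]

section ExponentialSums

open ZMod

variable {p : ℕ} [Fact p.Prime]

lemma sum_stdAddChar_mul (a : ZMod p) :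
    ∑ c : ZMod p, stdAddChar (c * a) = if a = 0 then (p : ℂ) else 0 := by
  simp [AddChar.sum_mulShift a (isPrimitive_stdAddChar p)]

lemma sum_norm_sq_sum_stdAddChar (W : Finset (ZMod p)) :
    ∑ c : ZMod p, ‖∑ w ∈ W, stdAddChar (c * w)‖ ^ 2 = p * #W := by
  have hexpand (c : ZMod p) : ((‖∑ w ∈ W, stdAddChar (c * w)‖ ^ 2 : ℝ) : ℂ) =
      ∑ w ∈ W, ∑ w' ∈ W, stdAddChar (c * (w - w')) := by
    rw [Complex.ofReal_pow, ← Complex.mul_conj', map_sum, sum_mul_sum]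
    refine sum_congr rfl fun w _ => sum_congr rfl fun w' _ => ?_
    rw [← AddChar.map_neg_eq_conj, ← AddChar.map_add_eq_mul, mul_sub, sub_eq_add_neg]
  apply Complex.ofReal_injective
  push_cast [hexpand]
  rw [sum_comm]
  simp_rw [sum_comm (s := (univ : Finset (ZMod p))), sum_stdAddChar_mul, sub_eq_zero]
  simp [mul_comm]

lemma norm_sq_sum_sum_stdAddChar_le (A B : Finset (ZMod p)) {c : ZMod p} (hc : c ≠ 0) :
    ‖∑ a ∈ A, ∑ b ∈ B, stdAddChar (c * (a * b))‖ ^ 2 ≤ p * #A * #B := by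
  have hrow : ∑ a : ZMod p, ‖∑ b ∈ B, stdAddChar (c * (a * b))‖ ^ 2 = p * #B := by
    rw [← sum_norm_sq_sum_stdAddChar B]
    exact Fintype.sum_equiv (Equiv.mulLeft₀ c hc) _ _ fun a => by simp [mul_assoc]
  calc ‖∑ a ∈ A, ∑ b ∈ B, stdAddChar (c * (a * b))‖ ^ 2
      ≤ (∑ a ∈ A, ‖∑ b ∈ B, stdAddChar (c * (a * b))‖) ^ 2 := by
        gcongr; exact norm_sum_le _ _
    _ ≤ #A * ∑ a ∈ A, ‖∑ b ∈ B, stdAddChar (c * (a * b))‖ ^ 2 := sq_sum_le_card_mul_sum_sq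
    _ ≤ #A * (p * #B) := by
        gcongr
        exact hrow ▸ sum_le_univ_sum_of_nonneg fun a => by positivity
    _ = p * #A * #B := by ring

lemma exists_mem_eq_of_sum_norm_lt {ι : Type*} (S : Finset ι) (f : ι → ZMod p) (t : ZMod p)
    (h : ∑ c ∈ univ.erase 0, ‖∑ x ∈ S, stdAddChar (c * f x)‖ < #S) : ∃ x ∈ S, f x = t := by
  -- `∑ c, g c = p · #{x ∈ S | f x = t}`, and the `c = 0` term of the sum is `#S`.
  by_contra! hne
  set g : ZMod p → ℂ := fun c => stdAddChar (-(c * t)) * ∑ x ∈ S, stdAddChar (c * f x)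
  have hvanish : ∑ c, g c = 0 := by
    simp_rw [g, mul_sum, ← AddChar.map_add_eq_mul]
    rw [sum_comm]
    refine sum_eq_zero fun x hx => ?_
    simp_rw [show ∀ c : ZMod p, -(c * t) + c * f x = c * (f x - t) by intro c; ring]
    rw [sum_stdAddChar_mul, if_neg (sub_ne_zero.mpr (hne x hx))]
  have hg0 : g 0 = #S := by simp [g]
  have hle : (#S : ℝ) ≤ ∑ c ∈ univ.erase 0, ‖∑ x ∈ S, stdAddChar (c * f x)‖ := by
    calc (#S : ℝ) = ‖∑ c ∈ univ.erase 0, g c‖ := by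
          rw [← add_sum_erase _ _ (mem_univ 0), hg0] at hvanish
          rw [eq_neg_of_add_eq_zero_right hvanish, norm_neg]
          simp
      _ ≤ ∑ c ∈ univ.erase 0, ‖g c‖ := norm_sum_le _ _
      _ = _ := by simp [g]
  exact (h.trans_le hle).false

lemma sum_stdAddChar_sum_mul_add_add {ι : Type*} [Fintype ι] [DecidableEq ι]
    (A B : ι → Finset (ZMod p)) (Z : Finset (ZMod p)) (c : ZMod p) :
    ∑ x ∈ Fintype.piFinset (fun i => A i ×ˢ B i) ×ˢ (Z ×ˢ Z),
        stdAddChar (c * (∑ i, (x.1 i).1 * (x.1 i).2 + x.2.1 + x.2.2)) =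
      (∏ i, ∑ ab ∈ A i ×ˢ B i, stdAddChar (c * (ab.1 * ab.2))) *
        (∑ z ∈ Z, stdAddChar (c * z)) ^ 2 := by
  rw [sq, sum_mul_sum, ← sum_product', prod_univ_sum, sum_mul_sum, ← sum_product']
  simp_rw [mul_add, mul_sum, AddChar.map_add_eq_mul, AddChar.map_sum_eq_prod, mul_assoc]

lemma norm_sum_stdAddChar_sum_mul_add_add_le {ι : Type*} [Fintype ι] [DecidableEq ι]
    (A B : ι → Finset (ZMod p)) (Z : Finset (ZMod p)) {c : ZMod p} (hc : c ≠ 0) :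
    ‖∑ x ∈ Fintype.piFinset (fun i => A i ×ˢ B i) ×ˢ (Z ×ˢ Z),
        stdAddChar (c * (∑ i, (x.1 i).1 * (x.1 i).2 + x.2.1 + x.2.2))‖ ≤
      √((p : ℝ) ^ Fintype.card ι * ∏ i, (#(A i) * #(B i) : ℝ)) *
        ‖∑ z ∈ Z, stdAddChar (c * z)‖ ^ 2 := by
  rw [sum_stdAddChar_sum_mul_add_add, norm_mul, norm_pow, norm_prod]
  gcongr
  refine Real.le_sqrt_of_sq_le ?_
  rw [← prod_pow, ← card_univ, ← prod_const, ← prod_mul_distrib]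
  gcongr with i
  rw [sum_product]
  exact (norm_sq_sum_sum_stdAddChar_le (A i) (B i) hc).trans_eq (mul_assoc _ _ _)

theorem exists_sum_mul_add_add_eq {ι : Type*} [Fintype ι] [DecidableEq ι]
    (A B : ι → Finset (ZMod p)) (Z : Finset (ZMod p))
    (h : p ^ (Fintype.card ι + 2) < (∏ i, #(A i) * #(B i)) * #Z ^ 2) (t : ZMod p) :
    ∃ a b : ι → ZMod p, (∀ i, a i ∈ A i) ∧ (∀ i, b i ∈ B i) ∧
      ∃ z ∈ Z, ∃ z' ∈ Z, ∑ i, a i * b i + z + z' = t := by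
  set S := Fintype.piFinset (fun i => A i ×ˢ B i) ×ˢ (Z ×ˢ Z)
  obtain ⟨P, hP⟩ : ∃ P : ℝ, ∏ i, (#(A i) * #(B i) : ℝ) = P := ⟨_, rfl⟩
  have hh : (p : ℝ) ^ (Fintype.card ι + 2) < P * #Z ^ 2 := by rw [← hP]; exact_mod_cast h
  have hpos : 0 < P * #Z ^ 2 := lt_of_le_of_lt (by positivity) hh
  have hP0 : 0 ≤ P := hP ▸ by positivity
  have hS : (#S : ℝ) = P * #Z ^ 2 := by
    simp [S, ← hP, card_product, Fintype.card_piFinset, sq]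
  have hbound : ∑ c ∈ univ.erase 0,
      ‖∑ x ∈ S, stdAddChar (c * (∑ i, (x.1 i).1 * (x.1 i).2 + x.2.1 + x.2.2))‖ < #S := calc
    _ ≤ ∑ c ∈ univ.erase 0,
          √((p : ℝ) ^ Fintype.card ι * P) * ‖∑ z ∈ Z, stdAddChar (c * z)‖ ^ 2 :=
        sum_le_sum fun c hc =>
          hP ▸ norm_sum_stdAddChar_sum_mul_add_add_le A B Z (ne_of_mem_erase hc)
    _ ≤ √((p : ℝ) ^ Fintype.card ι * P) * (p * #Z) := by
        rw [← mul_sum, ← sum_norm_sq_sum_stdAddChar]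
        gcongr
        exact erase_subset _ _
    _ = √((p : ℝ) ^ (Fintype.card ι + 2) * (P * #Z ^ 2)) := by
        rw [← Real.sqrt_sq (by positivity : (0 : ℝ) ≤ p * #Z), ← Real.sqrt_mul (by positivity)]
        ring_nf
    _ < √((P * #Z ^ 2) * (P * #Z ^ 2)) :=
        Real.sqrt_lt_sqrt (by positivity) (mul_lt_mul_of_pos_right hh hpos)
    _ = #S := by rw [Real.sqrt_mul_self hpos.le, hS]
  obtain ⟨⟨ab, z, z'⟩, hx, hsum⟩ := exists_mem_eq_of_sum_norm_lt S
    (fun x => ∑ i, (x.1 i).1 * (x.1 i).2 + x.2.1 + x.2.2) t hbound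
  simp only [S, mem_product, Fintype.mem_piFinset] at hx
  exact ⟨fun i => (ab i).1, fun i => (ab i).2, fun i => (hx.1 i).1, fun i => (hx.1 i).2,
    z, hx.2.1, z', hx.2.2, hsum⟩

end ExponentialSums

lemma sum_card_filter_sub_mem {G : Type*} [AddCommGroup G] [Fintype G] [DecidableEq G]
    (A : Finset G) : ∑ u, #{x ∈ A | u - x ∈ A} = #A ^ 2 := by
  have hrow (x : G) : ∑ u, (if u - x ∈ A then 1 else 0) = #A := by
    rw [Fintype.sum_equiv (Equiv.subRight x) (fun u => if u - x ∈ A then 1 else 0)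
      (fun v => if v ∈ A then 1 else 0) fun _ => rfl]
    simp
  simp_rw [card_filter]
  rw [sum_comm]
  simp [hrow, sq]

lemma sum_le_card_filter_lt_mul_add {α : Type*} [Fintype α] (F : α → ℕ) {M : ℕ} (T : ℕ)
    (hF : ∀ a, F a ≤ M) : ∑ a, F a ≤ #{a | T < F a} * M + Fintype.card α * T := by
  rw [← sum_filter_add_sum_filter_not univ (fun a => T < F a)]
  gcongr
  · simpa using sum_le_card_nsmul _ _ M fun a _ => hF a
  · calc ∑ a ∈ {a | ¬T < F a}, F a ≤ #{a | ¬T < F a} * T := by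
          simpa using sum_le_card_nsmul _ _ T fun a ha => not_lt.mp (mem_filter.mp ha).2
      _ ≤ Fintype.card α * T := by gcongr; exact card_le_univ _

lemma le_mul_of_sq_mul_sq_le_add {w z g q E : ℕ} (h : w ^ 2 * z ^ 2 ≤ g * (w * z ^ 2) + E)
    (hE : q * E ≤ (w * z) ^ 2) (hz : z + 1 ≤ q) : w * z ≤ q * g := by
  rcases Nat.eq_zero_or_pos (w * z ^ 2) with h0 | hpos
  · rcases mul_eq_zero.mp h0 with hw | hz0
    · simp [hw]
    · simp [pow_eq_zero_iff two_ne_zero |>.mp hz0]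
  -- `q • h` and `hE` give `(w z²) (q w) ≤ (w z²) (q g + w)`.
  have hqw : q * w ≤ q * g + w := Nat.le_of_mul_le_mul_left (by nlinarith) hpos
  nlinarith

namespace Heis

variable {p n : ℕ}

def mk (x y : Fin n → ZMod p) (z : ZMod p) : Heis p n := (x, y, z)

lemma mk_mul_mk (x y x' y' : Fin n → ZMod p) (z z' : ZMod p) :
    mk x y z * mk x' y' z' = mk (x + x') (y + y') (∑ i, x i * y' i + z + z') := rfl

def brick (X Y : Fin n → Finset (ZMod p)) (Z : Finset (ZMod p)) : Finset (Heis p n) :=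
  Fintype.piFinset X ×ˢ Fintype.piFinset Y ×ˢ Z

def fullCosets (S : Finset (Heis p n)) : Set ((Fin n → ZMod p) × (Fin n → ZMod p)) :=
  {uv | ∀ z, mk uv.1 uv.2 z ∈ S}

variable {X Y : Fin n → Finset (ZMod p)} {Z : Finset (ZMod p)}

lemma mem_brick {g : Heis p n} :
    g ∈ brick X Y Z ↔ (∀ i, g.1 i ∈ X i) ∧ (∀ i, g.2.1 i ∈ Y i) ∧ g.2.2 ∈ Z :=
  mem_product.trans (and_congr Fintype.mem_piFinset
    (mem_product.trans (and_congr_left' Fintype.mem_piFinset)))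

lemma card_brick : #(brick X Y Z) = (∏ i, #(X i)) * (∏ i, #(Y i)) * #Z := by
  change #(Fintype.piFinset X ×ˢ Fintype.piFinset Y ×ˢ Z) = _
  rw [card_product, card_product, Fintype.card_piFinset, Fintype.card_piFinset, mul_assoc]

lemma mk_mem_brick_mul_brick {u v a b : Fin n → ZMod p} {z z' : ZMod p}
    (ha : ∀ i, a i ∈ X i ∧ u i - a i ∈ X i) (hb : ∀ i, b i ∈ Y i ∧ v i - b i ∈ Y i)
    (hz : z ∈ Z) (hz' : z' ∈ Z) :
    mk u v (∑ i, a i * b i + z + z') ∈ brick X Y Z * brick X Y Z := by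
  have hg : mk a (v - b) z ∈ brick X Y Z :=
    mem_brick.2 ⟨fun i => (ha i).1, fun i => (hb i).2, hz⟩
  have hg' : mk (u - a) b z' ∈ brick X Y Z :=
    mem_brick.2 ⟨fun i => (ha i).2, fun i => (hb i).1, hz'⟩
  have := mul_mem_mul hg hg'
  rwa [mk_mul_mk, add_sub_cancel, sub_add_cancel] at this

/-- The number of ways to write `uv` as `(x, y) + (x', y')` with `x, x' ∈ ∏ i, X i` and
`y, y' ∈ ∏ i, Y i`. -/
def reprCount (X Y : Fin n → Finset (ZMod p)) (uv : (Fin n → ZMod p) × (Fin n → ZMod p)) : ℕ :=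
  ∏ i, #{x ∈ X i | uv.1 i - x ∈ X i} * #{y ∈ Y i | uv.2 i - y ∈ Y i}

lemma reprCount_le (uv : (Fin n → ZMod p) × (Fin n → ZMod p)) :
    reprCount X Y uv ≤ (∏ i, #(X i)) * ∏ i, #(Y i) := by
  rw [reprCount, prod_mul_distrib]
  gcongr <;> exact filter_subset _ _

lemma sum_reprCount [NeZero p] :
    ∑ uv, reprCount X Y uv = ((∏ i, #(X i)) * ∏ i, #(Y i)) ^ 2 := by
  simp_rw [reprCount, prod_mul_distrib, Fintype.sum_prod_type]
  rw [← sum_mul_sum, ← Fintype.prod_sum fun i a => #{x ∈ X i | a - x ∈ X i},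
    ← Fintype.prod_sum fun i b => #{y ∈ Y i | b - y ∈ Y i}]
  simp_rw [sum_card_filter_sub_mem, prod_pow, mul_pow]

lemma card_brick_univ_le_mul_ncard_fullCosets [NeZero p] (hX : ∀ i, (X i).Nonempty)
    (hY : ∀ i, (Y i).Nonempty) :
    #(brick X Y univ) ≤ p * (fullCosets (brick X Y univ * brick X Y univ)).ncard := by
  choose x₀ hx₀ using hX
  choose y₀ hy₀ using hY
  have hsub : (· + (x₀, y₀)) '' ↑(Fintype.piFinset X ×ˢ Fintype.piFinset Y) ⊆
      fullCosets (brick X Y univ * brick X Y univ) := by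
    rintro _ ⟨⟨x, y⟩, hxy, rfl⟩ t
    simp only [coe_product, Set.mem_prod, mem_coe, Fintype.mem_piFinset] at hxy
    have := mk_mem_brick_mul_brick (u := x + x₀) (v := y + y₀) (z := 0)
      (z' := t - ∑ i, x i * y₀ i) (fun i => ⟨hxy.1 i, by simpa using hx₀ i⟩)
      (fun i => ⟨hy₀ i, by simpa using hxy.2 i⟩) (mem_univ _) (mem_univ _)
    rwa [add_zero, add_sub_cancel] at this
  calc #(brick X Y univ) = p * #(Fintype.piFinset X ×ˢ Fintype.piFinset Y) := by
        rw [card_brick, card_univ, ZMod.card, card_product, Fintype.card_piFinset,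
          Fintype.card_piFinset, mul_comm]
    _ = p * ((· + (x₀, y₀)) '' ↑(Fintype.piFinset X ×ˢ Fintype.piFinset Y)).ncard := by
        rw [Set.ncard_image_of_injective _ (add_left_injective _), Set.ncard_coe_finset]
    _ ≤ p * (fullCosets (brick X Y univ * brick X Y univ)).ncard :=
        Nat.mul_le_mul_left _ (Set.ncard_le_ncard hsub (Set.toFinite _))

section Prime

variable [Fact p.Prime]

lemma mem_fullCosets_of_lt {uv : (Fin n → ZMod p) × (Fin n → ZMod p)}
    (h : p ^ (n + 2) < reprCount X Y uv * #Z ^ 2) :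
    uv ∈ fullCosets (brick X Y Z * brick X Y Z) := by
  intro t
  obtain ⟨a, b, ha, hb, z, hz, z', hz', rfl⟩ :=
    exists_sum_mul_add_add_eq _ _ Z (by rwa [Fintype.card_fin]) t
  simp only [mem_filter] at ha hb
  exact mk_mem_brick_mul_brick ha hb hz hz'

lemma card_brick_le_mul_ncard_fullCosets (hZ : Z ≠ univ)
    (hB : p ^ (3 * n + 3) ≤ #(brick X Y Z) ^ 2) :
    #(brick X Y Z) ≤ p * (fullCosets (brick X Y Z * brick X Y Z)).ncard := by
  set w := (∏ i, #(X i)) * ∏ i, #(Y i)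
  set good : Finset ((Fin n → ZMod p) × (Fin n → ZMod p)) :=
    {uv | p ^ (n + 2) < reprCount X Y uv * #Z ^ 2}
  have hcount : w ^ 2 * #Z ^ 2 ≤ #good * (w * #Z ^ 2) + p ^ (2 * n) * p ^ (n + 2) := by
    have := sum_le_card_filter_lt_mul_add (fun uv => reprCount X Y uv * #Z ^ 2) (p ^ (n + 2))
      fun uv => Nat.mul_le_mul_right _ (reprCount_le uv)
    rwa [← sum_mul, sum_reprCount, Fintype.card_prod, Fintype.card_fun, ZMod.card,
      Fintype.card_fin, ← pow_add, ← two_mul] at this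
  have hZp : #Z + 1 ≤ p := by
    simpa [ZMod.card] using (card_lt_iff_ne_univ Z).2 hZ
  have hgood : (good : Set _) ⊆ fullCosets (brick X Y Z * brick X Y Z) :=
    fun uv huv => mem_fullCosets_of_lt (mem_filter.1 huv).2
  calc #(brick X Y Z) = w * #Z := card_brick
    _ ≤ p * #good := by
        refine le_mul_of_sq_mul_sq_le_add hcount ?_ hZp
        rw [← card_brick, ← pow_add, ← pow_succ']
        convert hB using 2
        ring
    _ ≤ p * (fullCosets (brick X Y Z * brick X Y Z)).ncard := by
        gcongr
        rw [← Set.ncard_coe_finset]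
        exact Set.ncard_le_ncard hgood (Set.toFinite _)

end Prime

end Heis

lemma pow_le_sq_of_rpow_lt {ε : ℝ} {n p : ℕ} {b : ℝ} (hp : 1 ≤ p) (hn : 3 / (8 * ε) ≤ n)
    (hε : 0 < ε) (h : ((p : ℝ) ^ (2 * n + 1)) ^ ((3 : ℝ) / 4 + ε) < b) :
    (p : ℝ) ^ (3 * n + 3) ≤ b ^ 2 := by
  have hnε : 3 / 2 ≤ 4 * n * ε := by
    rw [div_le_iff₀ (by positivity)] at hn
    linarith
  calc (p : ℝ) ^ (3 * n + 3) = (p : ℝ) ^ ((3 * n + 3 : ℕ) : ℝ) := (Real.rpow_natCast _ _).symm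
    _ ≤ (p : ℝ) ^ ((2 * n + 1 : ℕ) * ((3 : ℝ) / 4 + ε) * 2) := by
        refine Real.rpow_le_rpow_of_exponent_le (by exact_mod_cast hp) ?_
        push_cast
        nlinarith
    _ = (((p : ℝ) ^ (2 * n + 1)) ^ ((3 : ℝ) / 4 + ε)) ^ 2 := by
        rw [Real.rpow_mul (by positivity), Real.rpow_mul (by positivity), Real.rpow_natCast,
          Real.rpow_two]
    _ ≤ b ^ 2 := pow_le_pow_left₀ (by positivity) h.le 2

theorem stmt13 : ∀ ε : ℝ, 0 < ε → ∃ n₀ : ℕ, ∀ n : ℕ, n₀ ≤ n →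
    ∀ (p : ℕ) [Fact p.Prime],
    ∀ (X Y : Fin n → Finset (ZMod p)) (Z : Finset (ZMod p)),
    (∀ i, (X i).Nonempty) → (∀ i, (Y i).Nonempty) → Z.Nonempty →
    (∀ i, (0 : ZMod p) ∉ X i) → (∀ i, (0 : ZMod p) ∉ Y i) →
    ∀ B : Finset (Heis p n),
    (∀ g : Heis p n, g ∈ B ↔
      ((∀ i, g.1 i ∈ X i) ∧ (∀ i, g.2.1 i ∈ Y i) ∧ g.2.2 ∈ Z)) →
    ((p : ℝ) ^ (2 * n + 1)) ^ ((3 : ℝ) / 4 + ε) < (B.card : ℝ) →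
    (B.card : ℝ) / p ≤
      (Set.ncard {ab : (Fin n → ZMod p) × (Fin n → ZMod p) |
        ∀ z : ZMod p, ((ab.1, ab.2, z) : Heis p n) ∈ B * B} : ℝ) := by
  intro ε hε
  refine ⟨⌈3 / (8 * ε)⌉₊, fun n hn p _ X Y Z hX hY hZ _ _ B hB hcard => ?_⟩
  obtain rfl : B = Heis.brick X Y Z := by
    ext g
    rw [hB, Heis.mem_brick]
  have hp : 1 ≤ p := (Fact.out : p.Prime).one_le
  have hbig : p ^ (3 * n + 3) ≤ #(Heis.brick X Y Z) ^ 2 := by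
    exact_mod_cast pow_le_sq_of_rpow_lt hp ((Nat.le_ceil _).trans (by exact_mod_cast hn)) hε hcard
  have key :
      #(Heis.brick X Y Z) ≤ p * (Heis.fullCosets (Heis.brick X Y Z * Heis.brick X Y Z)).ncard := by
    by_cases hZu : Z = univ
    · subst hZu
      exact Heis.card_brick_univ_le_mul_ncard_fullCosets hX hY
    · exact Heis.card_brick_le_mul_ncard_fullCosets hZu hbig
  rw [div_le_iff₀ (by exact_mod_cast hp), mul_comm]
  exact_mod_cast key
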